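/- For an input-enabled probabilistic automaton with finite state set, distribution-based bisimilarity ∼ is continuous: if μ_i ∼ ν_i for all i, lim_i μ_i = μ, and lim_i ν_i = ν, then μ ∼ ν. -/

import Mathlib

open Finset

structure ProbDist (S : Type) [Fintype S] where
  f : S → ℝ
  nonneg : ∀ s, 0 ≤ f s
  sum_one : ∑ s, f s = 1

/-- Probability assigned by a distribution to a set of states. -/
noncomputable def ProbDist.pr {S : Type} [Fintype S] (μ : ProbDist S) (C : Set S) : ℝ :=
  ∑ s, C.indicator μ.f s

/-- μ(A) := Σ_{s : L s = A} μ(s). -/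
noncomputable def pOf {S AP : Type} [Fintype S] (L : S → Finset AP) (μ : ProbDist S)
    (A : Finset AP) : ℝ :=
  μ.pr {s | L s = A}

/-- d_AP(μ,ν) := (1/2) Σ_{A ⊆ AP} |μ(A) − ν(A)|. -/
noncomputable def dAP {S AP : Type} [Fintype S] [Fintype AP] [DecidableEq AP]
    (L : S → Finset AP) (μ ν : ProbDist S) : ℝ :=
  (1 / 2) * ∑ A : Finset AP, |pOf L μ A - pOf L ν A|

/-- A (Segala) probabilistic automaton, image-finite. -/
structure PA (S Act AP : Type) [Fintype S] where
  trans : S → Act → ProbDist S → Prop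
  L : S → Finset AP
  imageFinite : ∀ s a, {μ | trans s a μ}.Finite

def PA.InputEnabled {S Act AP : Type} [Fintype S] (M : PA S Act AP) : Prop :=
  ∀ s a, ∃ μ, M.trans s a μ

noncomputable def PA.probOf {S Act AP : Type} [Fintype S] (M : PA S Act AP)
    (μ : ProbDist S) (A : Finset AP) : ℝ := pOf M.L μ A

/-- Combined transition s --a-->_P μ : μ is a convex combination of one-step successors. -/
def Combined {S Act AP : Type} [Fintype S] (M : PA S Act AP) (s : S) (a : Act)
    (μ : ProbDist S) : Prop :=
  ∃ (n : ℕ) (p : Fin n → ℝ) (ν : Fin n → ProbDist S),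
    (∀ i, 0 ≤ p i) ∧ (∑ i, p i = 1) ∧ (∀ i, M.trans s a (ν i)) ∧
    (∀ t, μ.f t = ∑ i, p i * (ν i).f t)

/-- Lifted transition μ --a--> μ' between distributions. -/
def Lifted {S Act AP : Type} [Fintype S] (M : PA S Act AP) (μ : ProbDist S) (a : Act)
    (μ' : ProbDist S) : Prop :=
  ∃ k : S → ProbDist S, (∀ s, 0 < μ.f s → Combined M s a (k s)) ∧
    (∀ t, μ'.f t = ∑ s, μ.f s * (k s).f t)

/-- ProbDist S carries the topology inherited from ℝ^{|S|}. -/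
noncomputable instance {S : Type} [Fintype S] : TopologicalSpace (ProbDist S) :=
  TopologicalSpace.induced (fun μ : ProbDist S => μ.f) inferInstance

/-- Distribution-based bisimulation. -/
def IsBisim {S Act AP : Type} [Fintype S] (M : PA S Act AP)
    (R : ProbDist S → ProbDist S → Prop) : Prop :=
  Symmetric R ∧ ∀ μ ν, R μ ν →
    (∀ A : Finset AP, M.probOf μ A = M.probOf ν A) ∧
    (∀ a μ', Lifted M μ a μ' → ∃ ν', Lifted M ν a ν' ∧ R μ' ν')

/-- Distribution-based bisimilarity. -/
def Bisimilar {S Act AP : Type} [Fintype S] (M : PA S Act AP) (μ ν : ProbDist S) : Prop :=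
  ∃ R, IsBisim M R ∧ R μ ν

/-! Identified with their weight vectors, distributions form the standard simplex, which is
compact. For an input-enabled automaton, a lifted transition is exactly `μ ↦ μ.bind k` for a
kernel `k` of combined transitions, and these kernels form a compact set (finite convex hulls),
so the graph of each lifted transition relation is closed. Hence the pairs that are limits of
bisimilar pairs form a bisimulation: a step of the limit is approximated by steps of the
approximants, their bisimilar answers have a convergent subsequence, and its limit is a step
by closedness. -/

open Filter Topology

namespace ProbDist

variable {S T : Type} [Fintype S] [Fintype T]

theorem f_injective : Function.Injective (fun μ : ProbDist S => μ.f) := by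
  rintro ⟨f, _, _⟩ ⟨g, _, _⟩ (rfl : f = g)
  rfl

theorem isEmbedding_f : IsEmbedding (fun μ : ProbDist S => μ.f) :=
  ⟨⟨rfl⟩, f_injective⟩

theorem continuous_f : Continuous (fun μ : ProbDist S => μ.f) :=
  isEmbedding_f.continuous

theorem continuous_f_apply (s : S) : Continuous fun μ : ProbDist S => μ.f s :=
  (continuous_apply s).comp continuous_f

theorem range_f : Set.range (fun μ : ProbDist S => μ.f) = stdSimplex ℝ S := by
  ext g
  exact ⟨by rintro ⟨μ, rfl⟩; exact ⟨μ.nonneg, μ.sum_one⟩, fun hg => ⟨⟨g, hg.1, hg.2⟩, rfl⟩⟩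

instance : T2Space (ProbDist S) := isEmbedding_f.t2Space

instance : FirstCountableTopology (ProbDist S) := isEmbedding_f.firstCountableTopology

instance : CompactSpace (ProbDist S) := by
  rw [← isCompact_univ_iff, isEmbedding_f.isInducing.isCompact_iff, Set.image_univ, range_f]
  exact isCompact_stdSimplex ℝ S

theorem continuous_pr (C : Set S) : Continuous fun μ : ProbDist S => μ.pr C := by
  refine continuous_finsetSum _ fun s _ => ?_
  by_cases hs : s ∈ C
  · simpa only [Set.indicator_of_mem hs] using continuous_f_apply s
  · simp only [Set.indicator_of_notMem hs, continuous_const]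

noncomputable def bind (μ : ProbDist S) (k : S → ProbDist T) : ProbDist T where
  f t := ∑ s, μ.f s * (k s).f t
  nonneg t := sum_nonneg fun s _ => mul_nonneg (μ.nonneg s) ((k s).nonneg t)
  sum_one := by simp_rw [sum_comm (γ := T), ← mul_sum, ProbDist.sum_one, mul_one, μ.sum_one]

theorem continuous_bind :
    Continuous fun p : ProbDist S × (S → ProbDist T) => p.1.bind p.2 := by
  refine isEmbedding_f.continuous_iff.2 (continuous_pi fun t => ?_)
  refine continuous_finsetSum _ fun s _ => Continuous.mul ?_ ?_
  · exact (continuous_f_apply s).comp continuous_fst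
  · exact (continuous_f_apply t).comp ((continuous_apply s).comp continuous_snd)

end ProbDist

section Transitions

variable {S Act AP : Type} [Fintype S] (M : PA S Act AP)

theorem PA.continuous_probOf (A : Finset AP) : Continuous fun μ => M.probOf μ A :=
  ProbDist.continuous_pr _

theorem combined_iff_mem_convexHull {s : S} {a : Act} {μ : ProbDist S} :
    Combined M s a μ ↔
      μ.f ∈ convexHull ℝ ((fun ν : ProbDist S => ν.f) '' {ν | M.trans s a ν}) := by
  rw [mem_convexHull_iff_exists_fintype]
  constructor
  · rintro ⟨n, p, ν, hp, hp1, hν, hμ⟩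
    refine ⟨Fin n, inferInstance, p, fun i => (ν i).f, hp, hp1, fun i => ⟨ν i, hν i, rfl⟩, ?_⟩
    ext t
    simp [hμ t]
  · rintro ⟨ι, _, w, z, hw, hw1, hz, hμ⟩
    choose ν hν hνz using hz
    let e := Fintype.equivFin ι
    refine ⟨Fintype.card ι, w ∘ e.symm, ν ∘ e.symm, fun i => hw _, ?_, fun i => hν _, fun t => ?_⟩
    · rwa [Function.comp_def, e.symm.sum_comp w]
    · simp only [← hμ, Finset.sum_apply, Pi.smul_apply, smul_eq_mul, ← hνz, Function.comp_apply]
      exact (e.symm.sum_comp fun i => w i * (ν i).f t).symm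

theorem isClosed_setOf_combined (s : S) (a : Act) : IsClosed {μ | Combined M s a μ} := by
  simp_rw [combined_iff_mem_convexHull]
  exact (((M.imageFinite s a).image _).isCompact_convexHull ℝ).isClosed.preimage
    ProbDist.continuous_f

theorem combined_of_trans {s : S} {a : Act} {ν : ProbDist S} (h : M.trans s a ν) :
    Combined M s a ν :=
  ⟨1, fun _ => 1, fun _ => ν, fun _ => zero_le_one, by simp, fun _ => h, fun t => by simp⟩

theorem lifted_iff_exists_bind (hM : M.InputEnabled) {μ μ' : ProbDist S} {a : Act} :
    Lifted M μ a μ' ↔ ∃ k : S → ProbDist S, (∀ s, Combined M s a (k s)) ∧ μ.bind k = μ' := by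
  constructor
  · rintro ⟨k, hk, hμ'⟩
    choose ν hν using fun s => hM s a
    classical
    -- off the support of `μ` the kernel is irrelevant, so input enabledness lets us complete it
    refine ⟨fun s => if 0 < μ.f s then k s else ν s, fun s => ?_, ProbDist.f_injective ?_⟩
    · dsimp only
      split_ifs with hs
      exacts [hk s hs, combined_of_trans M (hν s)]
    · ext t
      refine (Finset.sum_congr rfl fun s _ => ?_).trans (hμ' t).symm
      rcases (μ.nonneg s).lt_or_eq with hs | hs
      · simp [hs]
      · simp [← hs]
  · rintro ⟨k, hk, rfl⟩
    exact ⟨k, fun s _ => hk s, fun t => rfl⟩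

theorem isClosed_setOf_lifted (hM : M.InputEnabled) (a : Act) :
    IsClosed {p : ProbDist S × ProbDist S | Lifted M p.1 a p.2} := by
  have hkernels : IsClosed {k : S → ProbDist S | ∀ s, Combined M s a (k s)} := by
    simp_rw [Set.ofPred_forall]
    exact isClosed_iInter fun s =>
      (isClosed_setOf_combined M s a).preimage (continuous_apply (A := fun _ => ProbDist S) s)
  have himage : {p : ProbDist S × ProbDist S | Lifted M p.1 a p.2} =
      (fun q : ProbDist S × (S → ProbDist S) => (q.1, q.1.bind q.2)) ''
        (Set.univ ×ˢ {k | ∀ s, Combined M s a (k s)}) := by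
    ext ⟨μ, μ'⟩
    simp [lifted_iff_exists_bind M hM]
  rw [himage]
  exact ((isCompact_univ.prod hkernels.isCompact).image
    (continuous_fst.prodMk ProbDist.continuous_bind)).isClosed

theorem exists_tendsto_lifted (hM : M.InputEnabled) {ι : Type} {l : Filter ι}
    {μs : ι → ProbDist S} {μ μ' : ProbDist S} {a : Act}
    (hμ : Tendsto μs l (𝓝 μ)) (h : Lifted M μ a μ') :
    ∃ μ's : ι → ProbDist S, (∀ i, Lifted M (μs i) a (μ's i)) ∧ Tendsto μ's l (𝓝 μ') := by
  obtain ⟨k, hk, rfl⟩ := (lifted_iff_exists_bind M hM).1 h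
  refine ⟨fun i => (μs i).bind k, fun i => (lifted_iff_exists_bind M hM).2 ⟨k, hk, rfl⟩, ?_⟩
  exact (ProbDist.continuous_bind.tendsto (μ, k)).comp (hμ.prodMk_nhds tendsto_const_nhds)

end Transitions

namespace Bisimilar

variable {S Act AP : Type} [Fintype S] {M : PA S Act AP} {μ ν : ProbDist S}

theorem symm (h : Bisimilar M μ ν) : Bisimilar M ν μ :=
  let ⟨R, hR, hμν⟩ := h
  ⟨R, hR, hR.1 hμν⟩

theorem probOf_eq (h : Bisimilar M μ ν) (A : Finset AP) : M.probOf μ A = M.probOf ν A :=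
  let ⟨_, hR, hμν⟩ := h
  (hR.2 μ ν hμν).1 A

theorem exists_lifted (h : Bisimilar M μ ν) {a : Act} {μ' : ProbDist S} (hμ' : Lifted M μ a μ') :
    ∃ ν', Lifted M ν a ν' ∧ Bisimilar M μ' ν' :=
  let ⟨R, hR, hμν⟩ := h
  let ⟨ν', hν', hR'⟩ := (hR.2 μ ν hμν).2 a μ' hμ'
  ⟨ν', hν', R, hR, hR'⟩

end Bisimilar

theorem isBisim_limits_of_bisimilar {S Act AP : Type} [Fintype S] (M : PA S Act AP)
    (hM : M.InputEnabled) :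
    IsBisim M fun x y => ∃ xs ys : ℕ → ProbDist S, (∀ i, Bisimilar M (xs i) (ys i)) ∧
      Tendsto xs atTop (𝓝 x) ∧ Tendsto ys atTop (𝓝 y) := by
  refine ⟨fun x y ⟨xs, ys, hb, hx, hy⟩ => ⟨ys, xs, fun i => (hb i).symm, hy, hx⟩,
    fun x y ⟨xs, ys, hb, hx, hy⟩ => ⟨fun A => ?_, fun a x' hx' => ?_⟩⟩
  · refine tendsto_nhds_unique (((M.continuous_probOf A).tendsto _).comp hx) ?_
    exact (((M.continuous_probOf A).tendsto _).comp hy).congr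
      fun i => ((hb i).probOf_eq A).symm
  · obtain ⟨x's, hx's, hx'⟩ := exists_tendsto_lifted M hM hx hx'
    choose y's hy's hb' using fun i => (hb i).exists_lifted (hx's i)
    obtain ⟨y', φ, hφ, hy'⟩ := CompactSpace.tendsto_subseq y's
    refine ⟨y', ?_, x's ∘ φ, y's ∘ φ, fun i => hb' (φ i), hx'.comp hφ.tendsto_atTop, hy'⟩
    exact (isClosed_setOf_lifted M hM a).mem_of_tendsto ((hy.comp hφ.tendsto_atTop).prodMk_nhds hy')
      (Eventually.of_forall fun i => hy's (φ i))

theorem stmt6 {S Act AP : Type} [Fintype S] (M : PA S Act AP) (hM : M.InputEnabled)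
    (μs νs : ℕ → ProbDist S) (μ ν : ProbDist S)
    (h : ∀ i, Bisimilar M (μs i) (νs i))
    (hμ : Filter.Tendsto μs Filter.atTop (nhds μ))
    (hν : Filter.Tendsto νs Filter.atTop (nhds ν)) :
    Bisimilar M μ ν := by
  exact ⟨_, isBisim_limits_of_bisimilar M hM, μs, νs, h, hμ, hν⟩
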